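/- (Game characterization of the convex weight of states, finite-dimensional case) Let F be a nonempty compact convex set of d×d density matrices and let ρ be a d×d density matrix. Then inf { Re(tr(Y·ρ)) / (inf_{σ∈F} Re(tr(Y·σ))) : Y a d×d positive semidefinite matrix with inf_{σ∈F} Re(tr(Y·σ)) > 0 } = 1 − W_F(ρ). -/

import Mathlib

open scoped ENNReal NNReal ComplexOrder

/-- A density matrix: a positive semidefinite complex matrix of trace one. -/
def IsDensity {d : ℕ} (ρ : Matrix (Fin d) (Fin d) ℂ) : Prop :=
  ρ.PosSemidef ∧ ρ.trace = 1

/-- The convex weight of a state `ρ` w.r.t. a free set `F`: the infimum of those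
`μ ∈ [0,1]` for which there are a density matrix `τ` and `σ ∈ F` with
`ρ = μ • τ + (1 - μ) • σ`, with `inf ∅ = ∞`. -/
noncomputable def WgtS {d : ℕ} (F : Set (Matrix (Fin d) (Fin d) ℂ))
    (ρ : Matrix (Fin d) (Fin d) ℂ) : ℝ≥0∞ :=
  ⨅ μ ∈ {μ : ℝ | 0 ≤ μ ∧ μ ≤ 1 ∧ ∃ τ, IsDensity τ ∧
      ∃ σ ∈ F, ρ = μ • τ + (1 - μ) • σ}, ENNReal.ofReal μ

/-!
If `ρ = μ τ + (1 - μ) σ` with `σ ∈ F`, then for positive semidefinite `Y` we get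
`Re tr(Y ρ) ≥ (1 - μ) Re tr(Y σ) ≥ (1 - μ) min_F Re tr(Y ·)`, so every payoff ratio is at least
`1 - W_F(ρ)`. Conversely, for `t > 1 - W_F(ρ)` no `ρ - t σ` with `σ ∈ F` is positive
semidefinite, since otherwise `1 - t` would be an admissible weight with `τ = (ρ - t σ) / (1 - t)`.
The compact convex set `{ρ - t σ | σ ∈ F}` is then strictly separated from the closed convex
cone of positive semidefinite matrices. On Hermitian matrices the separating functional is
`Re tr(H ·)` with `H` Hermitian, and it is nonnegative on the cone, so `H` is positive
semidefinite; its payoff ratio is at most `t`.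
-/

open Matrix ComplexStarModule

theorem ENNReal.toReal_biInf_ofReal {s : Set ℝ} (hs : s.Nonempty) (h0 : ∀ x ∈ s, 0 ≤ x) :
    (⨅ x ∈ s, ENNReal.ofReal x).toReal = sInf s := by
  have := hs.to_subtype
  rw [iInf_subtype', ← ENNReal.ofReal_iInf, ← sInf_eq_iInf',
    ENNReal.toReal_ofReal (Real.sInf_nonneg h0)]

namespace Matrix

variable {n : Type*} [Fintype n]

instance : LocallyConvexSpace ℝ (Matrix n n ℂ) :=
  inferInstanceAs (LocallyConvexSpace ℝ (n → n → ℂ))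

theorem PosSemidef.re_trace_mul_nonneg {A B : Matrix n n ℂ} (hA : A.PosSemidef)
    (hB : B.PosSemidef) : 0 ≤ (A * B).trace.re := by
  classical
  obtain ⟨C, rfl⟩ : ∃ C : Matrix n n ℂ, B = Cᴴ * C := by
    open scoped MatrixOrder Matrix.Norms.L2Operator in
    exact CStarAlgebra.nonneg_iff_eq_star_mul_self.mp hB.nonneg
  rw [← Matrix.mul_assoc, trace_mul_cycle]
  exact (Complex.nonneg_iff.mp (hA.mul_mul_conjTranspose_same C).trace_nonneg).1

theorem posSemidef_of_forall_re_trace_mul_nonneg {H : Matrix n n ℂ} (hH : H.IsHermitian)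
    (h : ∀ B : Matrix n n ℂ, B.PosSemidef → 0 ≤ (H * B).trace.re) : H.PosSemidef := by
  refine posSemidef_iff_dotProduct_mulVec.mpr ⟨hH, fun x => Complex.nonneg_iff.mpr ⟨?_, ?_⟩⟩
  · simpa [mul_vecMulVec, trace_vecMulVec, dotProduct_comm] using
      h _ (posSemidef_vecMulVec_self_star x)
  · exact (hH.im_star_dotProduct_mulVec_self x).symm

theorem isClosed_setOf_posSemidef : IsClosed {A : Matrix n n ℂ | A.PosSemidef} := by
  simp only [posSemidef_iff_dotProduct_mulVec, IsHermitian, Set.ofPred_and, Set.ofPred_forall]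
  refine (isClosed_eq (by fun_prop) continuous_id).inter (isClosed_iInter fun x => ?_)
  exact isClosed_le continuous_const (by fun_prop)

omit [Fintype n] in
theorem convex_setOf_posSemidef : Convex ℝ {A : Matrix n n ℂ | A.PosSemidef} :=
  fun _ hA _ hB _ _ ha hb _ => (hA.smul ha).add (hB.smul hb)

theorem exists_trace_mul_eq {R : Type*} [CommSemiring R]
    (g : Matrix n n R →ₗ[R] R) : ∃ Y : Matrix n n R, ∀ X, g X = (Y * X).trace := by
  classical
  refine ⟨of fun j i => g (single i j 1), fun X => ?_⟩
  suffices g = traceLinearMap n R R ∘ₗ LinearMap.mulLeft R (of fun j i => g (single i j 1)) from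
    congr($this X)
  refine ext_linearMap R fun i j => LinearMap.ext fun a => ?_
  have hsingle : single i j a = a • single i j 1 := by rw [smul_single, smul_eq_mul, mul_one]
  simp only [LinearMap.comp_apply, singleLinearMap_apply, LinearMap.mulLeft_apply,
    traceLinearMap_apply, trace_mul_single]
  rw [hsingle, map_smul]
  simp [mul_comm]

theorem exists_re_trace_mul_eq (f : Matrix n n ℂ →ₗ[ℝ] ℝ) :
    ∃ Y : Matrix n n ℂ, ∀ X, f X = (Y * X).trace.re := by
  obtain ⟨Y, hY⟩ := exists_trace_mul_eq (Module.Dual.extendRCLike (𝕜 := ℂ) f)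
  exact ⟨Y, fun X => by rw [← hY]; exact (Module.Dual.re_extendRCLike_apply (𝕜 := ℂ) f X).symm⟩

theorem re_trace_realPart_mul (Y : Matrix n n ℂ) {X : Matrix n n ℂ} (hX : X.IsHermitian) :
    ((ℜ Y : Matrix n n ℂ) * X).trace.re = (Y * X).trace.re := by
  have h : (Yᴴ * X).trace = star (Y * X).trace := by
    rw [← trace_conjTranspose, conjTranspose_mul, hX.eq, trace_mul_comm]
  rw [realPart_apply_coe, smul_mul_assoc, add_mul, trace_smul, trace_add, star_eq_conjTranspose,
    Complex.smul_re, Complex.add_re, h, Complex.star_def, Complex.conj_re, smul_eq_mul]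
  ring

theorem exists_isHermitian_re_trace_mul_eq (f : Matrix n n ℂ →ₗ[ℝ] ℝ) :
    ∃ H : Matrix n n ℂ, H.IsHermitian ∧ ∀ X, X.IsHermitian → f X = (H * X).trace.re := by
  obtain ⟨Y, hY⟩ := exists_re_trace_mul_eq f
  exact ⟨ℜ Y, (ℜ Y).2, fun X hX => by rw [hY, re_trace_realPart_mul Y hX]⟩

theorem exists_posSemidef_re_trace_mul_lt {K : Set (Matrix n n ℂ)} (hKc : IsCompact K)
    (hKv : Convex ℝ K) (hKh : ∀ X ∈ K, X.IsHermitian) (hK : ∀ X ∈ K, ¬ X.PosSemidef) :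
    ∃ H : Matrix n n ℂ, H.PosSemidef ∧ ∃ u < 0, ∀ X ∈ K, (H * X).trace.re < u := by
  obtain ⟨f, u, v, hfK, huv, hfP⟩ := geometric_hahn_banach_compact_closed hKv hKc
    convex_setOf_posSemidef isClosed_setOf_posSemidef
    (Set.disjoint_left.mpr fun X hX hXP => hK X hX hXP)
  have hv : v < 0 := by simpa using hfP 0 PosSemidef.zero
  have hf_nonneg : ∀ B : Matrix n n ℂ, B.PosSemidef → 0 ≤ f B := by
    intro B hB
    by_contra! hfB
    have hc : 0 ≤ v / f B := div_nonneg_of_nonpos hv.le hfB.le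
    have := hfP _ (hB.smul hc)
    rw [map_smul, smul_eq_mul, div_mul_cancel₀ _ hfB.ne] at this
    exact this.false
  obtain ⟨H, hH, hfH⟩ := exists_isHermitian_re_trace_mul_eq f.toLinearMap
  refine ⟨H, posSemidef_of_forall_re_trace_mul_nonneg hH fun B hB => ?_, u, huv.trans hv,
    fun X hX => ?_⟩
  · rw [← hfH B hB.1]; exact hf_nonneg B hB
  · rw [← hfH X (hKh X hX)]; exact hfK X hX

end Matrix

section ConvexWeight

variable {n : Type*} [Fintype n]

noncomputable def minPayoff (F : Set (Matrix n n ℂ)) (Y : Matrix n n ℂ) : ℝ :=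
  sInf ((fun σ => (Y * σ).trace.re) '' F)

theorem minPayoff_le {F : Set (Matrix n n ℂ)} (hF : IsCompact F) (Y : Matrix n n ℂ)
    {σ : Matrix n n ℂ} (hσ : σ ∈ F) : minPayoff F Y ≤ (Y * σ).trace.re :=
  csInf_le (hF.image (by fun_prop)).bddBelow ⟨σ, hσ, rfl⟩

theorem le_minPayoff {F : Set (Matrix n n ℂ)} (hF : F.Nonempty) {Y : Matrix n n ℂ} {c : ℝ}
    (h : ∀ σ ∈ F, c ≤ (Y * σ).trace.re) : c ≤ minPayoff F Y :=
  le_csInf (hF.image _) (Set.forall_mem_image.mpr h)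

theorem minPayoff_one [DecidableEq n] {F : Set (Matrix n n ℂ)} (hF : F.Nonempty)
    (htr : ∀ σ ∈ F, σ.trace = 1) : minPayoff F 1 = 1 := by
  have : (fun σ => ((1 : Matrix n n ℂ) * σ).trace.re) '' F = {1} :=
    (Set.image_congr fun σ hσ => by simp [htr σ hσ]).trans (hF.image_const 1)
  rw [minPayoff, this, csInf_singleton]

variable {d : ℕ} (F : Set (Matrix (Fin d) (Fin d) ℂ)) (ρ : Matrix (Fin d) (Fin d) ℂ)

def admissibleWeights : Set ℝ :=
  {μ | 0 ≤ μ ∧ μ ≤ 1 ∧ ∃ τ, IsDensity τ ∧ ∃ σ ∈ F, ρ = μ • τ + (1 - μ) • σ}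

def payoffRatios : Set ℝ :=
  {x | ∃ Y : Matrix (Fin d) (Fin d) ℂ, Y.PosSemidef ∧ 0 < minPayoff F Y ∧
    x = (Y * ρ).trace.re / minPayoff F Y}

variable {F ρ}

theorem one_mem_admissibleWeights (hF : F.Nonempty) (hρ : IsDensity ρ) :
    (1 : ℝ) ∈ admissibleWeights F ρ := by
  obtain ⟨σ, hσ⟩ := hF
  exact ⟨zero_le_one, le_rfl, ρ, hρ, σ, hσ, by simp⟩

theorem toReal_wgtS (hF : F.Nonempty) (hρ : IsDensity ρ) :
    (WgtS F ρ).toReal = sInf (admissibleWeights F ρ) :=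
  ENNReal.toReal_biInf_ofReal ⟨1, one_mem_admissibleWeights hF hρ⟩ fun _ hμ => hμ.1

theorem sInf_admissibleWeights_le_one (hF : F.Nonempty) (hρ : IsDensity ρ) :
    sInf (admissibleWeights F ρ) ≤ 1 :=
  csInf_le ⟨0, fun _ hμ => hμ.1⟩ (one_mem_admissibleWeights hF hρ)

theorem one_sub_mem_admissibleWeights {σ : Matrix (Fin d) (Fin d) ℂ} (hσF : σ ∈ F)
    (hσ : IsDensity σ) (hρ : IsDensity ρ) {t : ℝ} (ht0 : 0 ≤ t) (ht1 : t < 1)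
    (hpsd : (ρ - t • σ).PosSemidef) : 1 - t ∈ admissibleWeights F ρ := by
  have ht : (1 - t) ≠ 0 := by linarith
  refine ⟨by linarith, by linarith, (1 - t)⁻¹ • (ρ - t • σ),
    ⟨hpsd.smul (inv_nonneg.mpr (by linarith)), ?_⟩, σ, hσF, ?_⟩
  · rw [trace_smul, trace_sub, trace_smul, hρ.2, hσ.2]
    have : (1 - t : ℂ) ≠ 0 := mod_cast ht
    rw [Complex.real_smul, Complex.real_smul]
    push_cast
    field_simp
  · rw [smul_smul, mul_inv_cancel₀ ht, one_smul, sub_sub_cancel, sub_add_cancel]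

theorem one_mem_payoffRatios (hF : F.Nonempty) (hFd : ∀ σ ∈ F, IsDensity σ)
    (hρ : IsDensity ρ) : (1 : ℝ) ∈ payoffRatios F ρ := by
  have h1 : minPayoff F 1 = 1 := minPayoff_one hF fun σ hσ => (hFd σ hσ).2
  exact ⟨1, PosSemidef.one, by rw [h1]; exact one_pos, by simp [h1, hρ.2]⟩

theorem one_sub_le_of_mem_payoffRatios (hFc : IsCompact F) {μ x : ℝ}
    (hμ : μ ∈ admissibleWeights F ρ) (hx : x ∈ payoffRatios F ρ) : 1 - μ ≤ x := by
  obtain ⟨hμ0, hμ1, τ, hτ, σ, hσ, rfl⟩ := hμ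
  obtain ⟨Y, hY, hm, rfl⟩ := hx
  have hsplit : (Y * (μ • τ + (1 - μ) • σ)).trace.re =
      μ * (Y * τ).trace.re + (1 - μ) * (Y * σ).trace.re := by
    simp [mul_add, trace_add]
  rw [le_div_iff₀ hm, hsplit]
  linarith [mul_nonneg hμ0 (hY.re_trace_mul_nonneg hτ.1),
    mul_le_mul_of_nonneg_left (minPayoff_le hFc Y hσ) (sub_nonneg.mpr hμ1)]

theorem one_sub_sInf_admissibleWeights_le (hF : F.Nonempty) (hFc : IsCompact F)
    (hρ : IsDensity ρ) {x : ℝ} (hx : x ∈ payoffRatios F ρ) :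
    1 - sInf (admissibleWeights F ρ) ≤ x :=
  sub_le_comm.mp <| le_csInf ⟨1, one_mem_admissibleWeights hF hρ⟩ fun _ hμ =>
    sub_le_comm.mp (one_sub_le_of_mem_payoffRatios hFc hμ hx)

theorem not_posSemidef_sub_smul {σ : Matrix (Fin d) (Fin d) ℂ} (hσF : σ ∈ F)
    (hσ : IsDensity σ) (hρ : IsDensity ρ) {t : ℝ} (ht0 : 0 ≤ t)
    (ht : 1 - sInf (admissibleWeights F ρ) < t) (ht1 : t < 1) : ¬ (ρ - t • σ).PosSemidef := by
  intro hpsd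
  have := csInf_le ⟨0, fun _ hμ => hμ.1⟩
    (one_sub_mem_admissibleWeights hσF hσ hρ ht0 ht1 hpsd)
  linarith

theorem exists_mem_payoffRatios_le (hF : F.Nonempty) (hFc : IsCompact F) (hFv : Convex ℝ F)
    (hFd : ∀ σ ∈ F, IsDensity σ) (hρ : IsDensity ρ) {t : ℝ}
    (ht : 1 - sInf (admissibleWeights F ρ) < t) : ∃ x ∈ payoffRatios F ρ, x ≤ t := by
  rcases le_or_gt 1 t with ht1 | ht1
  · exact ⟨1, one_mem_payoffRatios hF hFd hρ, ht1⟩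
  have ht0 : 0 < t := by linarith [sInf_admissibleWeights_le_one hF hρ]
  have hK : ∀ X ∈ (fun σ => ρ - t • σ) '' F, ¬ X.PosSemidef := by
    rintro _ ⟨σ, hσ, rfl⟩
    exact not_posSemidef_sub_smul hσ (hFd σ hσ) hρ ht0.le ht ht1
  have hKv : Convex ℝ ((fun σ => ρ - t • σ) '' F) := by
    simpa only [← Set.image_smul, Set.image_image, sub_eq_add_neg, ← neg_smul] using
      (hFv.smul (-t)).translate ρ
  have hKh : ∀ X ∈ (fun σ => ρ - t • σ) '' F, X.IsHermitian := by
    rintro _ ⟨σ, hσ, rfl⟩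
    exact hρ.1.isHermitian.sub ((hFd σ hσ).1.smul ht0.le).isHermitian
  obtain ⟨H, hH, u, hu, hHu⟩ :=
    exists_posSemidef_re_trace_mul_lt (hFc.image (by fun_prop)) hKv hKh hK
  have hsep : ∀ σ ∈ F, ((H * ρ).trace.re - u) / t ≤ (H * σ).trace.re := by
    intro σ hσ
    have := hHu _ ⟨σ, hσ, rfl⟩
    simp only [mul_sub, trace_sub, mul_smul_comm, trace_smul, Complex.sub_re, Complex.real_smul,
      Complex.re_ofReal_mul] at this
    rw [div_le_iff₀ ht0]
    linarith
  have hm := le_minPayoff hF hsep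
  have hm0 : 0 < minPayoff F H :=
    (div_pos (by linarith [hH.re_trace_mul_nonneg hρ.1]) ht0).trans_le hm
  refine ⟨_, ⟨H, hH, hm0, rfl⟩, ?_⟩
  rw [div_le_iff₀ hm0]
  rw [div_le_iff₀ ht0] at hm
  linarith [mul_comm t (minPayoff F H)]

end ConvexWeight

/-- Game characterization of the convex weight of states: the infimum over positive
semidefinite witnesses `Y` with positive minimal payoff over `F` of the payoff
ratio equals `1 - W_F(ρ)`. -/
theorem wgt_game {d : ℕ} (F : Set (Matrix (Fin d) (Fin d) ℂ))
    (hne : F.Nonempty) (hcomp : IsCompact F) (hconv : Convex ℝ F)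
    (hFd : ∀ σ ∈ F, IsDensity σ)
    (ρ : Matrix (Fin d) (Fin d) ℂ) (hρ : IsDensity ρ) :
    sInf {x : ℝ | ∃ Y : Matrix (Fin d) (Fin d) ℂ, Y.PosSemidef ∧
        0 < sInf ((fun σ => ((Y * σ).trace).re) '' F) ∧
        x = ((Y * ρ).trace).re / sInf ((fun σ => ((Y * σ).trace).re) '' F)} =
      1 - (WgtS F ρ).toReal := by
  change sInf (payoffRatios F ρ) = _
  rw [toReal_wgtS hne hρ]
  have hlower : ∀ x ∈ payoffRatios F ρ, 1 - sInf (admissibleWeights F ρ) ≤ x :=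
    fun _ => one_sub_sInf_admissibleWeights_le hne hcomp hρ
  refine le_antisymm (le_of_forall_gt_imp_ge_of_dense fun t ht => ?_)
    (le_csInf ⟨1, one_mem_payoffRatios hne hFd hρ⟩ hlower)
  obtain ⟨x, hx, hxt⟩ := exists_mem_payoffRatios_le hne hcomp hconv hFd hρ ht
  exact csInf_le_of_le ⟨_, hlower⟩ hx hxt
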